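/- Let m, n ≥ 1, let c and c′ be proper 3-colorings of the m×n grid graph, and let h be a height function for c and h′ a height function for c′ such that h(v₀) − h′(v₀) is even for some vertex v₀ (equivalently, h(v) − h′(v) is even for every vertex v). Then there exists a sequence of proper 3-colorings from c to c′, in which consecutive colorings differ at exactly one vertex, of length exactly (1/2)·Σ_v |h(v) − h′(v)|. -/
import Mathlib


/-- Adjacency in the `m × n` grid graph: two vertices are adjacent iff they differ by
`1` in exactly one coordinate. -/
def GridAdj {m n : ℕ} (u v : Fin m × Fin n) : Prop :=
  (u.1 = v.1 ∧ ((u.2 : ℕ) = (v.2 : ℕ) + 1 ∨ (v.2 : ℕ) = (u.2 : ℕ) + 1)) ∨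
  (u.2 = v.2 ∧ ((u.1 : ℕ) = (v.1 : ℕ) + 1 ∨ (v.1 : ℕ) = (u.1 : ℕ) + 1))

/-- A proper 3-coloring of the `m × n` grid graph. -/
def Proper3 {m n : ℕ} (c : Fin m × Fin n → ZMod 3) : Prop :=
  ∀ u v : Fin m × Fin n, GridAdj u v → c u ≠ c v

/-- A height function for a 3-coloring `c`: congruent to `c` mod 3 at every vertex,
and differing by exactly `1` across every edge of the grid graph. -/
def IsHeight {m n : ℕ} (c : Fin m × Fin n → ZMod 3) (h : Fin m × Fin n → ℤ) : Prop :=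
  (∀ v : Fin m × Fin n, ((h v : ℤ) : ZMod 3) = c v) ∧
  ∀ u v : Fin m × Fin n, GridAdj u v → |h u - h v| = 1

section Aux

variable {m n : ℕ}

lemma gridAdj_symm {u v : Fin m × Fin n} (h : GridAdj u v) : GridAdj v u := by
  rcases h with ⟨h1, h2⟩ | ⟨h1, h2⟩
  · exact Or.inl ⟨h1.symm, h2.symm⟩
  · exact Or.inr ⟨h1.symm, h2.symm⟩

lemma gridAdj_irrefl (v : Fin m × Fin n) : ¬ GridAdj v v := by
  rintro (⟨-, h⟩ | ⟨-, h⟩) <;> omega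

lemma even_abs_int (a : ℤ) : Even |a| ↔ Even a := by
  rcases abs_choice a with hc | hc <;> rw [hc] <;> simp

lemma proper_of_isHeight {c : Fin m × Fin n → ZMod 3} {h : Fin m × Fin n → ℤ}
    (hh : IsHeight c h) : Proper3 c := by
  intro u v huv heq
  have e := hh.2 u v huv
  have key : ((h u - h v : ℤ) : ZMod 3) = 0 := by
    push_cast
    rw [hh.1 u, hh.1 v, heq, sub_self]
  rcases (abs_eq (by norm_num : (0:ℤ) ≤ 1)).mp e with d | d <;> rw [d] at key <;>
    norm_num at key

lemma isHeight_neg {c : Fin m × Fin n → ZMod 3} {h : Fin m × Fin n → ℤ}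
    (hh : IsHeight c h) : IsHeight (fun v => -(c v)) (fun v => -(h v)) := by
  constructor
  · intro v
    push_cast
    rw [hh.1 v]
  · intro u v huv
    have e := hh.2 u v huv
    have : -h u - -h v = -(h u - h v) := by ring
    rw [this, abs_neg]
    exact e

lemma step_pos {c c' : Fin m × Fin n → ZMod 3} {h h' : Fin m × Fin n → ℤ}
    (hh : IsHeight c h) (hh' : IsHeight c' h')
    (hev : ∀ v, Even (h v - h' v)) (hpos : ∃ v, h' v < h v) :
    ∃ (v : Fin m × Fin n) (c₁ : Fin m × Fin n → ZMod 3) (h₁ : Fin m × Fin n → ℤ),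
      IsHeight c₁ h₁ ∧ c₁ v ≠ c v ∧ (∀ u, u ≠ v → c₁ u = c u) ∧
      (∀ u, u ≠ v → h₁ u = h u) ∧ |h₁ v - h' v| = |h v - h' v| - 2 := by
  classical
  obtain ⟨w₀, hw₀⟩ := hpos
  obtain ⟨a, -, ha⟩ := Finset.exists_max_image Finset.univ (fun u => h u - h' u)
    ⟨w₀, Finset.mem_univ _⟩
  obtain ⟨v, hvS, hv⟩ := Finset.exists_max_image
    (Finset.univ.filter fun u => h u - h' u = h a - h' a) h ⟨a, by simp⟩
  have hgv : h v - h' v = h a - h' a := (Finset.mem_filter.mp hvS).2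
  have hmax : ∀ u, h u - h' u ≤ h v - h' v := by
    intro u
    have := ha u (Finset.mem_univ u)
    omega
  have hmaxh : ∀ u, h u - h' u = h v - h' v → h u ≤ h v := by
    intro u hu
    exact hv u (Finset.mem_filter.mpr ⟨Finset.mem_univ u, by omega⟩)
  have hv2 : 2 ≤ h v - h' v := by
    have h1 := hmax w₀
    have h2 := hev v
    rw [Int.even_iff] at h2
    omega
  have hloc : ∀ u, GridAdj u v → h u = h v - 1 := by
    intro u hu
    have e1 := hh.2 u v hu
    have e2 := hh'.2 u v hu
    rcases (abs_eq (by norm_num : (0:ℤ) ≤ 1)).mp e1 with d1 | d1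
    · rcases (abs_eq (by norm_num : (0:ℤ) ≤ 1)).mp e2 with d2 | d2
      · have : h u ≤ h v := hmaxh u (by omega)
        omega
      · have := hmax u
        omega
    · omega
  refine ⟨v, Function.update c v (c v + 1), Function.update h v (h v - 2),
    ⟨?_, ?_⟩, ?_, ?_, ?_, ?_⟩
  · intro u
    by_cases hu : u = v
    · subst hu
      rw [Function.update_self, Function.update_self]
      push_cast
      rw [hh.1 u]
      have : ∀ x : ZMod 3, x - 2 = x + 1 := by decide
      exact this _
    · rw [Function.update_of_ne hu, Function.update_of_ne hu]
      exact hh.1 u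
  · intro u w huw
    by_cases hu : u = v
    · subst hu
      have hw : w ≠ u := fun e => gridAdj_irrefl u (e ▸ huw)
      rw [Function.update_self, Function.update_of_ne hw]
      rw [hloc w (gridAdj_symm huw)]
      have : h u - 2 - (h u - 1) = -1 := by ring
      rw [this]
      norm_num
    · by_cases hw : w = v
      · subst hw
        rw [Function.update_of_ne hu, Function.update_self]
        rw [hloc u huw]
        have : h w - 1 - (h w - 2) = 1 := by ring
        rw [this]
        norm_num
      · rw [Function.update_of_ne hu, Function.update_of_ne hw]
        exact hh.2 u w huw
  · rw [Function.update_self]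
    have : ∀ x : ZMod 3, x + 1 ≠ x := by decide
    exact this _
  · intro u hu
    rw [Function.update_of_ne hu]
  · intro u hu
    rw [Function.update_of_ne hu]
  · rw [Function.update_self, abs_of_nonneg (by omega : (0:ℤ) ≤ h v - 2 - h' v),
      abs_of_nonneg (by omega : (0:ℤ) ≤ h v - h' v)]
    ring

lemma step {c c' : Fin m × Fin n → ZMod 3} {h h' : Fin m × Fin n → ℤ}
    (hh : IsHeight c h) (hh' : IsHeight c' h')
    (hev : ∀ v, Even (h v - h' v)) (hne : ∃ v, h v ≠ h' v) :
    ∃ (v : Fin m × Fin n) (c₁ : Fin m × Fin n → ZMod 3) (h₁ : Fin m × Fin n → ℤ),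
      IsHeight c₁ h₁ ∧ c₁ v ≠ c v ∧ (∀ u, u ≠ v → c₁ u = c u) ∧
      (∀ u, u ≠ v → h₁ u = h u) ∧ |h₁ v - h' v| = |h v - h' v| - 2 := by
  obtain ⟨w, hw⟩ := hne
  rcases lt_or_gt_of_ne hw with hlt | hgt
  · -- h w < h' w : apply step_pos to the negated heights
    have hev' : ∀ u, Even ((fun x => -(h x)) u - (fun x => -(h' x)) u) := by
      intro u
      have h1 := hev u
      rw [Int.even_iff] at h1 ⊢
      simp only
      omega
    obtain ⟨v, c₁, h₁, H1, H2, H3, H4, H5⟩ :=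
      step_pos (isHeight_neg hh) (isHeight_neg hh') hev'
        ⟨w, by simpa using neg_lt_neg hlt⟩
    refine ⟨v, fun u => -(c₁ u), fun u => -(h₁ u), isHeight_neg H1, ?_, ?_, ?_, ?_⟩
    · intro H
      exact H2 (by rw [← H, neg_neg])
    · intro u hu
      have := H3 u hu
      simp only at this ⊢
      rw [this, neg_neg]
    · intro u hu
      have := H4 u hu
      simp only at this ⊢
      rw [this, neg_neg]
    · have e1 : -(h₁ v) - h' v = -(h₁ v - -(h' v)) := by ring
      have e2 : -(h v) - -(h' v) = -(h v - h' v) := by ring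
      rw [e1, abs_neg, H5, e2, abs_neg]
  · exact step_pos hh hh' hev ⟨w, hgt⟩

lemma main_ind {m n : ℕ} :
    ∀ (N : ℕ) (c c' : Fin m × Fin n → ZMod 3) (h h' : Fin m × Fin n → ℤ),
      IsHeight c h → IsHeight c' h' → (∀ v, Even (h v - h' v)) →
      (∑ v : Fin m × Fin n, |h v - h' v|) = 2 * N →
      ∃ seq : ℕ → Fin m × Fin n → ZMod 3,
        seq 0 = c ∧ seq N = c' ∧ (∀ k ≤ N, Proper3 (seq k)) ∧
        (∀ k < N, ∃ v, seq (k+1) v ≠ seq k v ∧ ∀ u, u ≠ v → seq (k+1) u = seq k u) := by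
  intro N
  induction N with
  | zero =>
    intro c c' h h' hh hh' hev hsum
    have hz : ∀ v : Fin m × Fin n, |h v - h' v| = 0 := by
      have := (Finset.sum_eq_zero_iff_of_nonneg
        (fun v _ => abs_nonneg (h v - h' v))).mp (by simpa using hsum)
      intro v
      exact this v (Finset.mem_univ v)
    have hcc : c = c' := by
      funext v
      have := abs_eq_zero.mp (hz v)
      have hvv : h v = h' v := by omega
      rw [← hh.1 v, ← hh'.1 v, hvv]
    refine ⟨fun _ => c, rfl, hcc ▸ rfl, ?_, ?_⟩
    · intro k _
      exact proper_of_isHeight hh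
    · intro k hk
      omega
  | succ N ih =>
    intro c c' h h' hh hh' hev hsum
    have hne : ∃ v, h v ≠ h' v := by
      by_contra hcon
      push_neg at hcon
      have hz : ∑ v : Fin m × Fin n, |h v - h' v| = 0 :=
        Finset.sum_eq_zero (fun v _ => by rw [hcon v]; simp)
      rw [hz] at hsum
      omega
    obtain ⟨v, c₁, h₁, H1, H2, H3, H4, H5⟩ := step hh hh' hev hne
    have hev1 : ∀ u, Even (h₁ u - h' u) := by
      intro u
      by_cases hu : u = v
      · subst hu
        have h2 := hev u
        rw [← even_abs_int] at h2 ⊢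
        rw [H5]
        rw [Int.even_iff] at h2 ⊢
        omega
      · rw [H4 u hu]
        exact hev u
    have hsum1 : ∑ u : Fin m × Fin n, |h₁ u - h' u| = 2 * N := by
      have key : ∑ u : Fin m × Fin n, (|h u - h' u| - |h₁ u - h' u|) = 2 := by
        rw [Finset.sum_eq_single v]
        · rw [H5]; ring
        · intro b _ hb
          rw [H4 b hb]
          ring
        · intro hv
          exact absurd (Finset.mem_univ v) hv
      rw [Finset.sum_sub_distrib] at key
      omega
    obtain ⟨seq', s0, sN, sprop, smove⟩ := ih c₁ c' h₁ h' H1 hh' hev1 hsum1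
    refine ⟨fun k => Nat.casesOn k c (fun j => seq' j), rfl, sN, ?_, ?_⟩
    · intro k hk
      cases k with
      | zero => exact proper_of_isHeight hh
      | succ j => exact sprop j (by omega)
    · intro k hk
      cases k with
      | zero =>
        refine ⟨v, ?_, ?_⟩
        · show seq' 0 v ≠ c v
          rw [s0]
          exact H2
        · intro u hu
          show seq' 0 u = c u
          rw [s0]
          exact H3 u hu
      | succ j => exact smove j (by omega)

lemma height_parity (hm : 0 < m) (hn : 0 < n) {h : Fin m × Fin n → ℤ}
    (hE : ∀ u v : Fin m × Fin n, GridAdj u v → |h u - h v| = 1) :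
    ∀ v : Fin m × Fin n,
      Even (h v - h (⟨0, hm⟩, ⟨0, hn⟩) + ((v.1 : ℕ) : ℤ) + ((v.2 : ℕ) : ℤ)) := by
  have col : ∀ (i : Fin m) (j : ℕ) (hj : j < n),
      Even (h (i, ⟨j, hj⟩) - h (i, ⟨0, hn⟩) + (j : ℤ)) := by
    intro i j
    induction j with
    | zero =>
      intro hj
      have : (⟨0, hj⟩ : Fin n) = ⟨0, hn⟩ := rfl
      rw [this]
      simp
    | succ j ihj =>
      intro hj
      have hj' : j < n := by omega
      have adj : GridAdj (i, (⟨j, hj'⟩ : Fin n)) (i, ⟨j + 1, hj⟩) :=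
        Or.inl ⟨rfl, Or.inr rfl⟩
      have e := hE _ _ adj
      have prev := ihj hj'
      rcases (abs_eq (by norm_num : (0:ℤ) ≤ 1)).mp e with d | d <;>
        · rw [Int.even_iff] at prev ⊢
          push_cast at prev ⊢
          omega
  have row : ∀ (i : ℕ) (hi : i < m),
      Even (h (⟨i, hi⟩, ⟨0, hn⟩) - h (⟨0, hm⟩, ⟨0, hn⟩) + (i : ℤ)) := by
    intro i
    induction i with
    | zero =>
      intro hi
      have : (⟨0, hi⟩ : Fin m) = ⟨0, hm⟩ := rfl
      rw [this]
      simp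
    | succ i ihi =>
      intro hi
      have hi' : i < m := by omega
      have adj : GridAdj ((⟨i, hi'⟩ : Fin m), (⟨0, hn⟩ : Fin n)) (⟨i + 1, hi⟩, ⟨0, hn⟩) :=
        Or.inr ⟨rfl, Or.inr rfl⟩
      have e := hE _ _ adj
      have prev := ihi hi'
      rcases (abs_eq (by norm_num : (0:ℤ) ≤ 1)).mp e with d | d <;>
        · rw [Int.even_iff] at prev ⊢
          push_cast at prev ⊢
          omega
  rintro ⟨⟨i, hi⟩, ⟨j, hj⟩⟩
  have c1 := col ⟨i, hi⟩ j hj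
  have r1 := row i hi
  simp only [Fin.val_mk] at *
  rw [Int.even_iff] at c1 r1 ⊢
  omega

end Aux

/-- If `h`, `h'` are height functions for proper 3-colorings `c`, `c'` whose difference
is even at some vertex, then there is a recoloring sequence from `c` to `c'` through
proper 3-colorings, changing one vertex at a time, of length exactly
`(1/2) ∑ v, |h v - h' v|`. -/
theorem height_function_exact_sequence (m n : ℕ) (hm : 1 ≤ m) (hn : 1 ≤ n)
    (c c' : Fin m × Fin n → ZMod 3) (hc : Proper3 c) (hc' : Proper3 c')
    (h h' : Fin m × Fin n → ℤ) (hh : IsHeight c h) (hh' : IsHeight c' h')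
    (hpar : ∃ v₀ : Fin m × Fin n, Even (h v₀ - h' v₀)) :
    ∃ (L : ℕ) (seq : ℕ → Fin m × Fin n → ZMod 3),
      seq 0 = c ∧ seq L = c' ∧
      (∀ k ≤ L, Proper3 (seq k)) ∧
      (∀ k < L, ∃ v, seq (k + 1) v ≠ seq k v ∧ ∀ u, u ≠ v → seq (k + 1) u = seq k u) ∧
      2 * (L : ℤ) = ∑ v : Fin m × Fin n, |h v - h' v| := by
  have hm0 : 0 < m := hm
  have hn0 : 0 < n := hn
  obtain ⟨v₀, hv₀⟩ := hpar
  have hev : ∀ v, Even (h v - h' v) := by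
    intro v
    have a1 := height_parity hm0 hn0 hh.2 v
    have a2 := height_parity hm0 hn0 hh'.2 v
    have a3 := height_parity hm0 hn0 hh.2 v₀
    have a4 := height_parity hm0 hn0 hh'.2 v₀
    rw [Int.even_iff] at a1 a2 a3 a4 hv₀ ⊢
    omega
  have hSnn : 0 ≤ ∑ v : Fin m × Fin n, |h v - h' v| :=
    Finset.sum_nonneg fun v _ => abs_nonneg _
  have hEach : ∀ v : Fin m × Fin n, |h v - h' v| = 2 * (|h v - h' v| / 2) := by
    intro v
    have := (even_abs_int (h v - h' v)).mpr (hev v)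
    rw [Int.even_iff] at this
    omega
  have hS2 : ∑ v : Fin m × Fin n, |h v - h' v|
      = 2 * ∑ v : Fin m × Fin n, (|h v - h' v| / 2) := by
    rw [Finset.mul_sum]
    exact Finset.sum_congr rfl fun v _ => hEach v
  set T : ℤ := ∑ v : Fin m × Fin n, (|h v - h' v| / 2) with hT
  have hTnn : 0 ≤ T := by omega
  have hcast : ((T.toNat : ℤ)) = T := Int.toNat_of_nonneg hTnn
  have hsum : ∑ v : Fin m × Fin n, |h v - h' v| = 2 * (T.toNat : ℤ) := by
    rw [hcast]; exact hS2
  obtain ⟨seq, s0, sN, sprop, smove⟩ :=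
    main_ind T.toNat c c' h h' hh hh' hev hsum
  exact ⟨T.toNat, seq, s0, sN, sprop, smove, by omega⟩
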